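/- Let N be a finite nonempty index set, D : N → ℝ with D_s > 0, C ≥ 0, and let a_s = (1/D_s)/(∑_{t∈N} 1/D_t) be the normalized inverse-distance weights. Let g₀ ∈ ℝ and g : N → ℝ satisfy |g₀ − g_s| ≤ C · D_s for all s ∈ N. Then the detail coefficient d = g₀ − ∑_{s∈N} a_s g_s satisfies |d| ≤ C · (∑_{s∈N} D_s) / |N|. -/
import Mathlib


/-- Proposition 2: bound on the LG-LOCAAT detail coefficient with the
inverse-distance prediction filter under a Lipschitz condition. -/
theorem detail_bound_inverse_distance
    {ι : Type*} (S : Finset ι) (hS : S.Nonempty)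
    (D g : ι → ℝ) (g₀ C : ℝ)
    (hD : ∀ s ∈ S, 0 < D s) (hC : 0 ≤ C)
    (hLip : ∀ s ∈ S, |g₀ - g s| ≤ C * D s) :
    |g₀ - ∑ s ∈ S, ((1 / D s) / (∑ t ∈ S, 1 / D t)) * g s|
      ≤ C * (∑ s ∈ S, D s) / (S.card : ℝ) := by
  set T := ∑ t ∈ S, 1 / D t with hT
  have hTpos : 0 < T :=
    Finset.sum_pos (fun t ht => one_div_pos.mpr (hD t ht)) hS
  have hcard : 0 < (S.card : ℝ) := by
    exact_mod_cast Finset.card_pos.mpr hS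
  have hsum1 : ∑ s ∈ S, (1 / D s) / T = 1 := by
    rw [← Finset.sum_div, ← hT, div_self hTpos.ne']
  have hrw : g₀ - ∑ s ∈ S, ((1 / D s) / T) * g s
      = ∑ s ∈ S, ((1 / D s) / T) * (g₀ - g s) := by
    simp only [mul_sub]
    rw [Finset.sum_sub_distrib, ← Finset.sum_mul, hsum1, one_mul]
  rw [hrw]
  have step1 : |∑ s ∈ S, ((1 / D s) / T) * (g₀ - g s)|
      ≤ ∑ s ∈ S, ((1 / D s) / T) * (C * D s) := by
    refine (Finset.abs_sum_le_sum_abs _ _).trans (Finset.sum_le_sum ?_)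
    intro s hs
    have ha : 0 ≤ (1 / D s) / T :=
      div_nonneg (one_div_nonneg.mpr (hD s hs).le) hTpos.le
    rw [abs_mul, abs_of_nonneg ha]
    exact mul_le_mul_of_nonneg_left (hLip s hs) ha
  have step2 : ∑ s ∈ S, ((1 / D s) / T) * (C * D s) = (S.card : ℝ) * C / T := by
    have : ∀ s ∈ S, ((1 / D s) / T) * (C * D s) = C / T := by
      intro s hs
      field_simp [(hD s hs).ne', hTpos.ne']
    rw [Finset.sum_congr rfl this, Finset.sum_const, nsmul_eq_mul, mul_div_assoc]
  have cauchy : (S.card : ℝ) ^ 2 ≤ (∑ s ∈ S, D s) * T := by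
    have h := Finset.sum_sq_le_sum_mul_sum_of_sq_eq_mul S
      (r := fun _ => (1 : ℝ)) (f := D) (g := fun s => 1 / D s)
      (fun s hs => (hD s hs).le) (fun s hs => (one_div_pos.mpr (hD s hs)).le)
      (fun s hs => by rw [one_pow, mul_one_div, div_self (hD s hs).ne'])
    rw [hT]
    simpa using h
  refine (step1.trans_eq step2).trans ?_
  rw [div_le_div_iff₀ hTpos hcard]
  nlinarith [mul_le_mul_of_nonneg_left cauchy hC]
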